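/- arXiv:1811.09843 — 4 statements merged into one kernel-verified Lean document; each statement's English description precedes it below -/
import Mathlib

section
/- Let R be a normal domain containing the rational numbers, and let S be a domain that is a finite extension of R. Then R is a direct summand of S as an R-module, a splitting being given by the normalized trace (1/[Frac(S):Frac(R)])·Tr. -/
/-!
Every element of `S` is integral over `R`, hence so is its trace, which therefore lies in `R`
because `R` is integrally closed: the trace restricts to an `R`-linear map `S → R`. It sends `1`
to the degree `[Frac S : Frac R]`, which is invertible in `R` since `ℚ ⊆ R`, and dividing by it
gives an `R`-linear retraction of `R → S`.
-/

open Module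

namespace Algebra

variable (R K L S : Type*) [CommRing R] [IsIntegrallyClosed R]
  [Field K] [Algebra R K] [IsFractionRing R K] [Field L] [Algebra K L] [FiniteDimensional K L]
  [Algebra R L] [IsScalarTower R K L] [CommRing S] [Algebra R S] [Algebra S L]
  [IsScalarTower R S L] [Algebra.IsIntegral R S]

noncomputable def traceOfIsIntegral : S →ₗ[R] R :=
  intTraceAux R K L (integralClosure R L) ∘ₗ
    ((IsScalarTower.toAlgHom R S L).codRestrict (integralClosure R L)
      fun x ↦ (IsIntegral.isIntegral x).algebraMap).toLinearMap

noncomputable def normalizedTraceOfIsIntegral [Algebra ℚ R] : S →ₗ[R] R :=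
  (finrank K L : ℚ)⁻¹ • traceOfIsIntegral R K L S

variable {R K L S}

theorem algebraMap_traceOfIsIntegral (x : S) :
    algebraMap R K (traceOfIsIntegral R K L S x) = trace K L (algebraMap S L x) :=
  map_intTraceAux (B := integralClosure R L) _

variable [Algebra ℚ R]

theorem algebraMap_normalizedTraceOfIsIntegral (x : S) :
    algebraMap R K (normalizedTraceOfIsIntegral R K L S x) =
      (finrank K L : K)⁻¹ * trace K L (algebraMap S L x) := by
  have hcast : (algebraMap R K).comp (algebraMap ℚ R) (finrank K L : ℚ)⁻¹ =
      (finrank K L : K)⁻¹ := by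
    rw [map_inv₀, map_natCast]
  rw [normalizedTraceOfIsIntegral, LinearMap.smul_apply, Algebra.smul_def, map_mul,
    ← RingHom.comp_apply, hcast, algebraMap_traceOfIsIntegral]

theorem normalizedTraceOfIsIntegral_one : normalizedTraceOfIsIntegral R K L S 1 = 1 := by
  have : CharZero K :=
    charZero_of_injective_ringHom ((algebraMap R K).comp (algebraMap ℚ R)).injective
  apply IsFractionRing.injective R K
  rw [algebraMap_normalizedTraceOfIsIntegral, map_one (algebraMap S L), map_one (algebraMap R K),
    ← map_one (algebraMap K L), trace_algebraMap, nsmul_one,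
    inv_mul_cancel₀ (Nat.cast_ne_zero.mpr finrank_pos.ne')]

end Algebra

attribute [local instance] FractionRing.liftAlgebra

theorem normal_domain_char_zero_splits_general (R S : Type*) [CommRing R] [IsDomain R]
    [IsIntegrallyClosed R] [Algebra ℚ R]
    [CommRing S] [IsDomain S] [Algebra R S] [NoZeroSMulDivisors R S] [Module.Finite R S] :
    ∃ lam : S →ₗ[R] R, lam 1 = 1 ∧
      ∀ s : S, algebraMap R (FractionRing R) (lam s) =
        (finrank (FractionRing R) (FractionRing S) : FractionRing R)⁻¹ *
          Algebra.trace (FractionRing R) (FractionRing S)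
            (algebraMap S (FractionRing S) s) :=
  ⟨Algebra.normalizedTraceOfIsIntegral R (FractionRing R) (FractionRing S) S,
    Algebra.normalizedTraceOfIsIntegral_one, Algebra.algebraMap_normalizedTraceOfIsIntegral⟩

/-- Let `R` be a Noetherian normal (integrally closed) domain containing `ℚ`
and let `S` be a domain which is a finite extension of `R`.  Then `R` is a direct summand of
`S` as an `R`-module, a splitting `λ` being given by the normalized trace
`(1/[Frac S : Frac R]) · Tr`. -/
theorem normal_domain_char_zero_splits (R S : Type*) [CommRing R] [IsDomain R]
    [IsNoetherianRing R] [IsIntegrallyClosed R] [Algebra ℚ R]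
    [CommRing S] [IsDomain S] [Algebra R S] [NoZeroSMulDivisors R S] [Module.Finite R S] :
    ∃ lam : S →ₗ[R] R, lam 1 = 1 ∧
      ∀ s : S, algebraMap R (FractionRing R) (lam s) =
        (finrank (FractionRing R) (FractionRing S) : FractionRing R)⁻¹ *
          Algebra.trace (FractionRing R) (FractionRing S)
            (algebraMap S (FractionRing S) s) :=
  normal_domain_char_zero_splits_general R S
end

section
/- Let R = Q[x,y]/(xy) and let S be its integral closure in its total ring of fractions (the normalization, isomorphic to Q[x] × Q[y]). Then the inclusion R → S does not split as a map of R-modules; i.e., there is no R-linear map λ : S → R with λ(1) = 1. -/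
open MvPolynomial

/-- The coordinate ring `ℚ[x,y]/(xy)` of the union of the two axes. -/
noncomputable abbrev RXY : Type :=
  MvPolynomial (Fin 2) ℚ ⧸ Ideal.span {(X 0 * X 1 : MvPolynomial (Fin 2) ℚ)}

/-- The normalization `ℚ[x] × ℚ[y]` of `ℚ[x,y]/(xy)`. -/
noncomputable abbrev SXY : Type := Polynomial ℚ × Polynomial ℚ

/-- Let `R = ℚ[x,y]/(xy)` and let `S = ℚ[x] × ℚ[y]` be its normalization,
with `R` embedded via `f ↦ (f mod y, f mod x)`, i.e. via the `ℚ`-algebra map `ψ` sending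
`x` to `(X, 0)` and `y` to `(0, X)`.  Then the inclusion `R → S` does not split as a map of
`R`-modules: there is no additive, `ℚ`-linear map `λ : S → R` with `λ 1 = 1` which is
`R`-linear (i.e. `λ (ψ r * s) = r * λ s`). -/
theorem no_splitting_normalization (ψ : RXY →ₐ[ℚ] SXY)
    (h0 : ψ (Ideal.Quotient.mk _ (X 0)) = (Polynomial.X, 0))
    (h1 : ψ (Ideal.Quotient.mk _ (X 1)) = (0, Polynomial.X)) :
    ¬ ∃ lam : SXY →ₗ[ℚ] RXY,
        lam 1 = 1 ∧ ∀ (r : RXY) (s : SXY), lam (ψ r * s) = r * lam s := by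
  rintro ⟨lam, hlam1, hlin⟩
  set mk : MvPolynomial (Fin 2) ℚ →+* RXY :=
    Ideal.Quotient.mk (Ideal.span {(X 0 * X 1 : MvPolynomial (Fin 2) ℚ)}) with hmk
  set x : RXY := mk (X 0) with hx
  set y : RXY := mk (X 1) with hy
  set e : SXY := ((1 : Polynomial ℚ), (0 : Polynomial ℚ)) with he
  -- x * lam e = x
  have hxe : x * lam e = x := by
    have h1' : ψ x * e = ψ x * 1 := by
      rw [h0]; ext <;> simp [he]
    have := hlin x e
    rw [h1', hlin x 1, hlam1, mul_one] at this
    exact this.symm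
  -- y * lam e = 0
  have hye : y * lam e = 0 := by
    have h2' : ψ y * e = 0 := by
      rw [h1]; ext <;> simp [he]
    have := hlin y e
    rw [h2', map_zero] at this
    exact this.symm
  obtain ⟨A, hA⟩ := Ideal.Quotient.mk_surjective (I :=
    Ideal.span {(X 0 * X 1 : MvPolynomial (Fin 2) ℚ)}) (lam e)
  -- y * A ∈ (xy)
  have hy0 : (X 1 * A : MvPolynomial (Fin 2) ℚ) ∈
      Ideal.span {(X 0 * X 1 : MvPolynomial (Fin 2) ℚ)} := by
    rw [← Ideal.Quotient.eq_zero_iff_mem]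
    show mk (X 1 * A) = 0
    rw [map_mul, hA]
    exact hye
  rw [Ideal.mem_span_singleton] at hy0
  obtain ⟨c, hc⟩ := hy0
  have hAc : A = X 0 * c := by
    apply mul_left_cancel₀ (X_ne_zero (R := ℚ) (1 : Fin 2))
    rw [hc]; ring
  -- x * A - x ∈ (xy)
  have hx0 : (X 0 * A - X 0 : MvPolynomial (Fin 2) ℚ) ∈
      Ideal.span {(X 0 * X 1 : MvPolynomial (Fin 2) ℚ)} := by
    rw [← Ideal.Quotient.eq_zero_iff_mem]
    show mk (X 0 * A - X 0) = 0
    rw [map_sub, map_mul, hA]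
    rw [show mk (X 0) * lam e = x * lam e from rfl, hxe]
    simp [hx]
  rw [Ideal.mem_span_singleton] at hx0
  obtain ⟨d, hd⟩ := hx0
  have key : (X 0 * c - 1 : MvPolynomial (Fin 2) ℚ) = X 1 * d := by
    apply mul_left_cancel₀ (X_ne_zero (R := ℚ) (0 : Fin 2))
    rw [hAc] at hd
    linear_combination hd
  have := congrArg (MvPolynomial.constantCoeff) key
  simp at this
end

section
/- Let R be a commutative ring and p a prime ideal generated by a regular sequence. Then the n-th symbolic power p^{(n)} equals the ordinary power p^n for every n ≥ 1. -/
/-!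
A weakly regular sequence `x` is quasi-regular: a form `F` of degree `n` with `F(x) ∈ Iⁿ⁺¹`,
where `I = (x)`, has all its coefficients in `I`. By induction on the length of `x`, let `z` be
its last element and `J` the ideal of the others; `z` is a nonzerodivisor modulo `J`, hence, by
quasi-regularity of the shorter sequence, modulo every `Jᵐ`. Writing `F = G + Z H` with `G` free
of `Z`, the relation `G(x) + z H(x) = 0` puts `H(x)` in `Jⁿ`, so `H` has coefficients in `I` by
induction on the degree, and `H(x) = B(x)` for a form `B` over `J`; then `G + z B` vanishes at
the shorter sequence, so its coefficients lie in `J` and those of `G` in `I`.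
Quasi-regularity makes every `u ∉ I` a nonzerodivisor modulo `Iⁿ`: if `u a ∈ Iⁿ⁺¹` with
`a = A(x) ∈ Iⁿ`, then `uA` has coefficients in `I`, hence so does `A` since `I` is prime.
So `Iⁿ` is `I`-primary, and a primary ideal is its own contraction from the localization.
-/
/-- The `n`-th symbolic power of a prime ideal `P`: the contraction of `PⁿR_P` under
`R → R_P`. -/
noncomputable def symbolicPower {R : Type*} [CommRing R] (P : Ideal R) [P.IsPrime]
    (n : ℕ) : Ideal R :=
  ((P ^ n).map (algebraMap R (Localization.AtPrime P))).comap
    (algebraMap R (Localization.AtPrime P))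

open MvPolynomial RingTheory.Sequence

namespace MvPolynomial

variable {R σ : Type*} [CommRing R]

theorem IsHomogeneous.eval_mem_mul_span_pow {J : Ideal R} {x : σ → R} {n : ℕ}
    {F : MvPolynomial σ R} (hF : F.IsHomogeneous n) (hFJ : F ∈ J.map C) :
    eval x F ∈ J * Ideal.span (Set.range x) ^ n := by
  rw [F.as_sum, map_sum]
  refine Ideal.sum_mem _ fun d hd => ?_
  rw [← mul_one (F.coeff d), ← C_mul_monomial, map_mul, eval_C]
  refine Ideal.mul_mem_mul (mem_map_C_iff.mp hFJ d) ?_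
  have hd : d.degree = n := by_contra fun h => mem_support_iff.mp hd (hF.coeff_eq_zero h)
  exact (Ideal.mem_span_pow_iff_exists_isHomogeneous x _).mpr
    ⟨_, isHomogeneous_monomial _ hd, rfl⟩

theorem exists_isHomogeneous_mem_map_C_eval_eq {J : Ideal R} {x : σ → R} {n : ℕ} {a : R}
    (ha : a ∈ J * Ideal.span (Set.range x) ^ n) :
    ∃ F : MvPolynomial σ R, F.IsHomogeneous n ∧ F ∈ J.map C ∧ eval x F = a := by
  refine Submodule.mul_induction_on ha (fun b hb c hc => ?_) ?_
  · obtain ⟨P, hP, rfl⟩ := (Ideal.mem_span_pow_iff_exists_isHomogeneous x c).mp hc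
    exact ⟨C b * P, hP.C_mul b, Ideal.mul_mem_right _ _ (Ideal.mem_map_of_mem _ hb),
      by rw [map_mul, eval_C]⟩
  · rintro _ _ ⟨F, hF, hFJ, rfl⟩ ⟨G, hG, hGJ, rfl⟩
    exact ⟨F + G, hF.add hG, add_mem hFJ hGJ, map_add _ _ _⟩

theorem rename_mem_map_C {τ : Type*} {I : Ideal R} (f : σ → τ) {F : MvPolynomial σ R}
    (hF : F ∈ I.map C) : rename f F ∈ I.map C := by
  have := Ideal.mem_map_of_mem (rename f (R := R) : MvPolynomial σ R →+* MvPolynomial τ R) hF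
  rwa [Ideal.map_map, ← algebraMap_eq, AlgHom.comp_algebraMap] at this

theorem mem_map_C_of_C_mul_mem {I : Ideal R} {u : R} (hu : ∀ a, u * a ∈ I → a ∈ I)
    {F : MvPolynomial σ R} (h : C u * F ∈ I.map C) : F ∈ I.map C :=
  mem_map_C_iff.mpr fun d => hu _ (by simpa only [coeff_C_mul] using mem_map_C_iff.mp h d)

theorem IsHomogeneous.exists_eq_rename_castSucc_add_X_last_mul {r m : ℕ}
    {F : MvPolynomial (Fin (r + 1)) R} (hF : F.IsHomogeneous (m + 1)) :
    ∃ G H, G.IsHomogeneous (m + 1) ∧ H.IsHomogeneous m ∧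
      F = rename Fin.castSucc G + X (Fin.last r) * H := by
  set e : Fin (r + 1) →₀ ℕ := Finsupp.single (Fin.last r) 1
  have hdeg : ∀ d, F.coeff d ≠ 0 → d.degree = m + 1 := fun d hd =>
    by_contra fun h => hd (hF.coeff_eq_zero h)
  have hvars : ↑(F.modMonomial e).vars ⊆ Set.range (Fin.castSucc : Fin r → Fin (r + 1)) := by
    intro i hi
    obtain ⟨d, hd, hid⟩ := (mem_vars_iff_mem_support i).mp hi
    rcases Fin.eq_castSucc_or_eq_last i with ⟨j, rfl⟩ | rfl
    · exact ⟨j, rfl⟩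
    refine absurd (coeff_modMonomial_of_le _ ?_) (mem_support_iff.mp hd)
    exact Finsupp.single_le_iff.mpr (Nat.one_le_iff_ne_zero.mpr (Finsupp.mem_support_iff.mp hid))
  obtain ⟨G, hG⟩ := exists_rename_eq_of_vars_subset_range _ _ (Fin.castSucc_injective r) hvars
  refine ⟨G, F.divMonomial e, ?_, fun d hd => ?_, ?_⟩
  · rw [← IsHomogeneous.rename_isHomogeneous_iff (Fin.castSucc_injective r), hG]
    intro d hd
    by_cases hed : e ≤ d
    · exact absurd (coeff_modMonomial_of_le _ hed) hd
    · rw [coeff_modMonomial_of_not_le _ hed] at hd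
      rw [Pi.one_def, ← Finsupp.degree_eq_weight_one]; exact hdeg d hd
  · have := hdeg _ hd
    rw [map_add, Finsupp.degree_single] at this
    rw [Pi.one_def, ← Finsupp.degree_eq_weight_one]; omega
  · rw [hG, modMonomial_add_divMonomial_single]

end MvPolynomial

section QuasiRegular

variable {R σ : Type*} [CommRing R]

/-- Degreewise injectivity of `(R ⧸ I)[X] → gr_I R`, `Xᵢ ↦ xᵢ`, where `I = (x)`. -/
def IsQuasiRegularSequence (x : σ → R) : Prop :=
  ∀ (n : ℕ) (F : MvPolynomial σ R), F.IsHomogeneous n →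
    eval x F ∈ Ideal.span (Set.range x) ^ (n + 1) → F ∈ (Ideal.span (Set.range x)).map C

theorem mem_map_C_of_eval_mem_span_pow_succ {x : σ → R} {n : ℕ}
    (h : ∀ F : MvPolynomial σ R, F.IsHomogeneous n → eval x F = 0 →
      F ∈ (Ideal.span (Set.range x)).map C)
    {F : MvPolynomial σ R} (hF : F.IsHomogeneous n)
    (hFx : eval x F ∈ Ideal.span (Set.range x) ^ (n + 1)) :
    F ∈ (Ideal.span (Set.range x)).map C := by
  rw [pow_succ'] at hFx
  obtain ⟨G, hG, hGI, hGF⟩ := exists_isHomogeneous_mem_map_C_eval_eq hFx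
  have hFG := h (F - G) (hF.sub hG) (by rw [map_sub, hGF, sub_self])
  simpa using add_mem hFG hGI

theorem IsQuasiRegularSequence.mem_pow_of_mul_mem_pow {x : σ → R}
    (hx : IsQuasiRegularSequence x) {u : R}
    (hu : ∀ a, u * a ∈ Ideal.span (Set.range x) → a ∈ Ideal.span (Set.range x)) :
    ∀ (n : ℕ) {a : R}, u * a ∈ Ideal.span (Set.range x) ^ n → a ∈ Ideal.span (Set.range x) ^ n
  | 0, _, _ => by simp
  | n + 1, a, h => by
    have ha : a ∈ ⊤ * Ideal.span (Set.range x) ^ n := by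
      rw [Ideal.top_mul]
      exact hx.mem_pow_of_mul_mem_pow hu n (Ideal.pow_le_pow_right n.le_succ h)
    obtain ⟨A, hA, -, rfl⟩ := exists_isHomogeneous_mem_map_C_eval_eq ha
    have hAI : A ∈ (Ideal.span (Set.range x)).map C :=
      mem_map_C_of_C_mul_mem hu (hx n _ (hA.C_mul u) (by rwa [map_mul, eval_C]))
    rw [pow_succ']
    exact hA.eval_mem_mul_span_pow hAI

theorem IsQuasiRegularSequence.isPrimary_pow {x : σ → R} (hx : IsQuasiRegularSequence x)
    (hP : (Ideal.span (Set.range x)).IsPrime) {n : ℕ} (hn : n ≠ 0) :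
    (Ideal.span (Set.range x) ^ n).IsPrimary := by
  refine Ideal.isPrimary_iff.mpr ⟨fun h => hP.ne_top (top_le_iff.mp (h ▸ Ideal.pow_le_self hn)),
    fun {a u} h => ?_⟩
  rw [Ideal.radical_pow _ hn, hP.radical, or_iff_not_imp_right]
  intro hu
  refine hx.mem_pow_of_mul_mem_pow (fun b hb => (hP.mem_or_mem hb).resolve_left hu) n ?_
  rwa [mul_comm]

theorem isWeaklyRegular_ofFn_succ_iff {r : ℕ} (x : Fin (r + 1) → R) :
    IsWeaklyRegular R (List.ofFn x) ↔ IsWeaklyRegular R (List.ofFn (x ∘ Fin.castSucc)) ∧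
      ∀ a, x (Fin.last r) * a ∈ Ideal.span (Set.range (x ∘ Fin.castSucc)) →
        a ∈ Ideal.span (Set.range (x ∘ Fin.castSucc)) := by
  have hspan : Ideal.ofList (List.ofFn fun i => x i.castSucc) • (⊤ : Submodule R R) =
      Ideal.span (Set.range (x ∘ Fin.castSucc)) := by
    simp only [Ideal.ofList, List.mem_ofFn, smul_eq_mul, Ideal.mul_top]
    rfl
  rw [List.ofFn_succ', List.concat_eq_append, isWeaklyRegular_append_iff,
    isWeaklyRegular_singleton_iff, hspan, isSMulRegular_quotient_iff_mem_of_smul_mem]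
  rfl

theorem mem_map_C_of_eval_eq_zero_of_isHomogeneous_succ {r m : ℕ} {x : Fin (r + 1) → R}
    (hy : IsQuasiRegularSequence (x ∘ Fin.castSucc))
    (hz : ∀ a, x (Fin.last r) * a ∈ Ideal.span (Set.range (x ∘ Fin.castSucc)) →
      a ∈ Ideal.span (Set.range (x ∘ Fin.castSucc)))
    (hm : ∀ F : MvPolynomial (Fin (r + 1)) R, F.IsHomogeneous m → eval x F = 0 →
      F ∈ (Ideal.span (Set.range x)).map C)
    {F : MvPolynomial (Fin (r + 1)) R} (hF : F.IsHomogeneous (m + 1)) (hFx : eval x F = 0) :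
    F ∈ (Ideal.span (Set.range x)).map C := by
  set y := x ∘ Fin.castSucc
  set z := x (Fin.last r)
  set I := Ideal.span (Set.range x)
  set J := Ideal.span (Set.range y)
  have hJI : J ≤ I := Ideal.span_mono (Set.range_comp_subset_range _ _)
  have hzI : z ∈ I := Ideal.subset_span ⟨_, rfl⟩
  obtain ⟨G, H, hG, hH, rfl⟩ := hF.exists_eq_rename_castSucc_add_X_last_mul
  have hGH : eval y G + z * eval x H = 0 := by
    simpa only [map_add, map_mul, eval_rename, eval_X] using hFx
  have hGJ : eval y G ∈ J ^ (m + 1) :=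
    (Ideal.mem_span_pow_iff_exists_isHomogeneous y _).mpr ⟨G, hG, rfl⟩
  have hHJ : eval x H ∈ J ^ (m + 1) := by
    refine hy.mem_pow_of_mul_mem_pow hz (m + 1) ?_
    rw [eq_neg_of_add_eq_zero_right hGH]
    exact neg_mem hGJ
  have hHI : H ∈ I.map C :=
    mem_map_C_of_eval_mem_span_pow_succ hm hH (Ideal.pow_right_mono hJI _ hHJ)
  obtain ⟨B, hB, hBH⟩ := (Ideal.mem_span_pow_iff_exists_isHomogeneous y _).mp hHJ
  have hGB : G + C z * B ∈ J.map C := by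
    refine hy (m + 1) _ (hG.add (hB.C_mul z)) ?_
    rw [map_add, map_mul, eval_C, hBH, hGH]
    exact zero_mem _
  have hGI : G ∈ I.map C := by
    simpa using sub_mem (Ideal.map_mono hJI hGB)
      (Ideal.mul_mem_right B _ (Ideal.mem_map_of_mem C hzI))
  exact add_mem (rename_mem_map_C _ hGI) (Ideal.mul_mem_left _ _ hHI)

theorem RingTheory.Sequence.IsWeaklyRegular.isQuasiRegularSequence {r : ℕ} {x : Fin r → R}
    (hx : IsWeaklyRegular R (List.ofFn x)) : IsQuasiRegularSequence x := by
  induction r with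
  | zero =>
    intro n F _ hFx
    obtain ⟨c, rfl⟩ := C_surjective (Fin 0) F
    simp_all [Set.range_eq_empty]
  | succ r ih =>
    obtain ⟨hy, hz⟩ := (isWeaklyRegular_ofFn_succ_iff x).mp hx
    have h0 (n : ℕ) (F : MvPolynomial (Fin (r + 1)) R) (hF : F.IsHomogeneous n)
        (hFx : eval x F = 0) : F ∈ (Ideal.span (Set.range x)).map C := by
      induction n generalizing F with
      | zero =>
        obtain ⟨c, rfl⟩ : ∃ c, F = C c :=
          ⟨_, totalDegree_eq_zero_iff_eq_C.mp ((totalDegree_zero_iff_isHomogeneous _).mpr hF)⟩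
        rw [eval_C] at hFx
        simp [hFx]
      | succ m hm => exact mem_map_C_of_eval_eq_zero_of_isHomogeneous_succ (ih hy) hz hm hF hFx
    exact fun n F hF => mem_map_C_of_eval_mem_span_pow_succ (h0 n) hF

end QuasiRegular

theorem symbolicPower_eq_pow_of_regular_generators_general
    (R : Type*) [CommRing R] (P : Ideal R) [P.IsPrime]
    (r : ℕ) (x : Fin r → R)
    (hgen : Ideal.span (Set.range x) = P)
    (hreg : RingTheory.Sequence.IsRegular R (List.ofFn x))
    (n : ℕ) (hn : 1 ≤ n) :
    symbolicPower P n = P ^ n := by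
  have hn0 : n ≠ 0 := Nat.one_le_iff_ne_zero.mp hn
  have hprimary : (P ^ n).IsPrimary := by
    subst hgen
    exact hreg.toIsWeaklyRegular.isQuasiRegularSequence.isPrimary_pow ‹_› hn0
  refine IsLocalization.under_map_of_isPrimary_disjoint P.primeCompl _ hprimary ?_
  exact Set.disjoint_left.mpr fun s hs hsP => hs (Ideal.pow_le_self hn0 hsP)

/-- Let `R` be a Noetherian commutative ring and `P` a prime ideal
generated by a regular sequence.  Then the `n`-th symbolic power `P⁽ⁿ⁾` equals the ordinary
power `Pⁿ` for every `n ≥ 1`. -/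
theorem symbolicPower_eq_pow_of_regular_generators
    (R : Type*) [CommRing R] [IsNoetherianRing R] (P : Ideal R) [P.IsPrime]
    (r : ℕ) (x : Fin r → R)
    (hgen : Ideal.span (Set.range x) = P)
    (hreg : RingTheory.Sequence.IsRegular R (List.ofFn x))
    (n : ℕ) (hn : 1 ≤ n) :
    symbolicPower P n = P ^ n :=
  symbolicPower_eq_pow_of_regular_generators_general R P r x hgen hreg n hn
end

section
/- Let R be a Noetherian ring of prime characteristic p such that the Frobenius endomorphism F : R → R, x ↦ x^p, is flat. Then R is reduced. -/
open Submodule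

theorem Module.Flat.mem_annihilator_smul_top_of_smul_eq_zero {R M : Type*} [CommRing R]
    [AddCommGroup M] [Module R M] [Module.Flat R M] {a : R} {m : M} (h : a • m = 0) :
    m ∈ (R ∙ a).annihilator • (⊤ : Submodule R M) := by
  obtain ⟨k, c, y, hm, hc⟩ := Module.Flat.isTrivialRelation_of_sum_smul_eq_zero
    (f := fun _ : Unit ↦ a) (x := fun _ ↦ m) (by simpa using h)
  rw [show m = _ from hm ()]
  refine Submodule.sum_mem _ fun j _ ↦ Submodule.smul_mem_smul ?_ mem_top
  simpa [mem_annihilator_span_singleton, mul_comm] using hc j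

theorem RingHom.Flat.map_annihilator_eq_top {R S : Type*} [CommRing R] [CommRing S]
    {f : R →+* S} (hf : f.Flat) {a : R} (ha : f a = 0) :
    (R ∙ a).annihilator.map f = ⊤ := by
  algebraize [f]
  have h1 : (1 : S) ∈ (R ∙ a).annihilator • (⊤ : Submodule R S) :=
    Module.Flat.mem_annihilator_smul_top_of_smul_eq_zero (by rwa [Algebra.smul_def, mul_one])
  rw [Ideal.smul_top_eq_map] at h1
  exact (Ideal.eq_top_iff_one _).mpr h1

theorem Ideal.map_frobenius_le {R : Type*} [CommRing R] (p : ℕ) [ExpChar R p] (I : Ideal R) :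
    I.map (frobenius R p) ≤ I :=
  Ideal.map_le_iff_le_comap.mpr fun x hx ↦ by
    simpa [frobenius_def] using I.pow_mem_of_mem hx p (expChar_pos R p)

theorem frobenius_injective_of_flat {R : Type*} [CommRing R] (p : ℕ) [ExpChar R p]
    (hflat : (frobenius R p).Flat) : Function.Injective (frobenius R p) := by
  refine (injective_iff_map_eq_zero _).mpr fun a ha ↦ ?_
  -- `Ann(a)` contains the ideal it generates under Frobenius, which flatness makes the unit ideal.
  have htop : (R ∙ a).annihilator = ⊤ :=
    top_le_iff.mp (hflat.map_annihilator_eq_top ha ▸ Ideal.map_frobenius_le p _)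
  simpa using (mem_annihilator_span_singleton a (1 : R)).mp (htop ▸ mem_top)

theorem isReduced_of_frobenius_injective {R : Type*} [CommRing R] {p : ℕ} (hp : 1 < p)
    [ExpChar R p] (h : Function.Injective (frobenius R p)) : IsReduced R := by
  rw [← nilradical_eq_bot_iff, ← pNilradical_eq_nilradical hp]
  exact pNilradical_eq_bot_of_frobenius_inj R p h

theorem reduced_of_frobenius_flat_general
    (R : Type*) [CommRing R]
    (p : ℕ) [Fact p.Prime] [CharP R p]
    (hflat : (frobenius R p).Flat) :
    IsReduced R :=
  isReduced_of_frobenius_injective (Fact.out : p.Prime).one_lt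
    (frobenius_injective_of_flat p hflat)

/-- Let `R` be a Noetherian ring of prime characteristic `p` such that the
Frobenius endomorphism `F : R → R`, `x ↦ x^p`, is flat.  Then `R` is reduced. -/
theorem reduced_of_frobenius_flat
    (R : Type*) [CommRing R] [IsNoetherianRing R]
    (p : ℕ) [Fact p.Prime] [CharP R p]
    (hflat : (frobenius R p).Flat) :
    IsReduced R :=
  reduced_of_frobenius_flat_general R p hflat
end
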